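/- Let p > q > 0 be coprime integers with p/q = [a_1, a_2, ..., a_n] (all a_i > 0, a_n > 1). Then [a_1, a_2, ..., a_{n-1}, a_n-1, a_n+1, a_{n-1}, a_{n-2}, ..., a_2, a_1] = p^2/(pq + (-1)^{n-1}). -/

import Mathlib

/-- Continued fraction value: `cf [a₀, a₁, ..., aₙ] = a₀ + 1/(a₁ + 1/(... + 1/aₙ))`. -/
def cf : List ℤ → ℚ
  | [] => 0
  | [a] => (a : ℚ)
  | a :: l => (a : ℚ) + (cf l)⁻¹

/-- Auxiliary for the Bredon–Wood sum: carries previous `a`, previous `b`,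
and the partial sum of the `b`'s. -/
def NsumAux : ℤ → ℤ → ℤ → List ℤ → ℤ
  | _, _, s, [] => s
  | pa, pb, s, a :: l =>
      NsumAux a (if pb = pa ∧ Even s then 0 else a)
        (s + (if pb = pa ∧ Even s then 0 else a)) l

/-- `Nsum [a₀,...,aₙ] = b₀ + ... + bₙ` where `b₀ = a₀` and
`bᵢ = 0` if `bᵢ₋₁ = aᵢ₋₁` and `b₀ + ... + bᵢ₋₁` is even, else `bᵢ = aᵢ`.
The Bredon–Wood invariant is `N(x,y) = Nsum l / 2` for `l` the continued
fraction expansion of `x/y`. -/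
def Nsum : List ℤ → ℤ
  | [] => 0
  | a :: l => NsumAux a a a l

/-- A valid continued fraction expansion: nonempty, `a₀ ≥ 0`,
`aᵢ > 0` for `i ≥ 1`, and the last term `> 1`. -/
def ValidCF (l : List ℤ) : Prop :=
  l ≠ [] ∧ 0 ≤ l.headI ∧ (∀ a ∈ l.tail, 0 < a) ∧ 1 < l.getLast!

/-!
Write `P(l)` for the product of the matrices `!![x, 1; 1, 0]` over the entries `x` of `l`.
For positive entries its first column `(P₀₀, P₁₀)` consists of the numerator and denominator of
`cf l`, and they are coprime because `det P(l) = ±1`. Reversing `l` transposes `P(l)`, so with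
`l = [a₁, …, aₙ₋₁]`, `A = P(l)` and `b = aₙ` the palindromic expansion has matrix
`A · !![b², b - 1; b + 1, 1] · Aᵀ`. Splitting the middle factor as `v vᵀ + !![0, -1; 1, 0]` with
`A v = (p, q)` gives first column `(p², pq + det A)`, and `det A = (-1)^(n-1)`.
-/

open Matrix

def cfStep (x : ℤ) : Matrix (Fin 2) (Fin 2) ℤ := !![x, 1; 1, 0]

def cfMatrix (l : List ℤ) : Matrix (Fin 2) (Fin 2) ℤ := (l.map cfStep).prod

@[simp]
lemma cfMatrix_nil : cfMatrix [] = 1 := rfl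

@[simp]
lemma cfMatrix_cons (x : ℤ) (l : List ℤ) : cfMatrix (x :: l) = cfStep x * cfMatrix l := by
  simp [cfMatrix]

@[simp]
lemma cfMatrix_append (l m : List ℤ) : cfMatrix (l ++ m) = cfMatrix l * cfMatrix m := by
  simp [cfMatrix]

lemma cfStep_transpose (x : ℤ) : (cfStep x)ᵀ = cfStep x := by
  ext i j; fin_cases i <;> fin_cases j <;> rfl

lemma cfMatrix_reverse (l : List ℤ) : cfMatrix l.reverse = (cfMatrix l)ᵀ := by
  induction l with
  | nil => simp
  | cons x l ih => simp [ih, transpose_mul, cfStep_transpose]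

lemma det_cfMatrix (l : List ℤ) : (cfMatrix l).det = (-1) ^ l.length := by
  induction l with
  | nil => simp
  | cons x l ih => rw [cfMatrix_cons, det_mul, ih, List.length_cons, pow_succ]; simp [cfStep]

lemma cfStep_mul_apply_zero_zero (x : ℤ) (P : Matrix (Fin 2) (Fin 2) ℤ) :
    (cfStep x * P) 0 0 = x * P 0 0 + P 1 0 := by
  simp [mul_apply, Fin.sum_univ_two, cfStep]

lemma cfStep_mul_apply_one_zero (x : ℤ) (P : Matrix (Fin 2) (Fin 2) ℤ) :
    (cfStep x * P) 1 0 = P 0 0 := by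
  simp [mul_apply, Fin.sum_univ_two, cfStep]

lemma cfMatrix_apply_zero_zero_pos {l : List ℤ} (h : ∀ x ∈ l, 0 < x) : 0 < cfMatrix l 0 0 := by
  suffices 0 < cfMatrix l 0 0 ∧ 0 ≤ cfMatrix l 1 0 from this.1
  induction l with
  | nil => simp
  | cons x l ih =>
    obtain ⟨h00, h10⟩ := ih fun y hy => h y (List.mem_cons_of_mem _ hy)
    have hx := h x List.mem_cons_self
    rw [cfMatrix_cons, cfStep_mul_apply_zero_zero, cfStep_mul_apply_one_zero]
    exact ⟨by nlinarith, h00.le⟩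

lemma cfMatrix_apply_one_zero_pos {l : List ℤ} (hl : l ≠ []) (h : ∀ x ∈ l, 0 < x) :
    0 < cfMatrix l 1 0 := by
  obtain ⟨x, t, rfl⟩ := List.exists_cons_of_ne_nil hl
  rw [cfMatrix_cons, cfStep_mul_apply_one_zero]
  exact cfMatrix_apply_zero_zero_pos fun y hy => h y (List.mem_cons_of_mem _ hy)

lemma cf_eq_cfMatrix {l : List ℤ} (hl : l ≠ []) (h : ∀ x ∈ l, 0 < x) :
    cf l = (cfMatrix l 0 0 : ℚ) / cfMatrix l 1 0 := by
  induction l with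
  | nil => exact absurd rfl hl
  | cons x l ih =>
    rcases l with _ | ⟨y, t⟩
    · simp [cf, cfStep]
    have ht : ∀ z ∈ y :: t, 0 < z := fun z hz => h z (List.mem_cons_of_mem _ hz)
    have hP : (cfMatrix (y :: t) 0 0 : ℚ) ≠ 0 := by
      exact_mod_cast (cfMatrix_apply_zero_zero_pos ht).ne'
    change (x : ℚ) + (cf (y :: t))⁻¹ = _
    rw [ih (List.cons_ne_nil y t) ht, cfMatrix_cons x, cfStep_mul_apply_zero_zero,
      cfStep_mul_apply_one_zero]
    push_cast
    field_simp

lemma isCoprime_cfMatrix (l : List ℤ) : IsCoprime (cfMatrix l 0 0) (cfMatrix l 1 0) := by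
  have hdet := det_cfMatrix l
  rw [det_fin_two] at hdet
  refine ⟨(-1) ^ l.length * cfMatrix l 1 1, -((-1) ^ l.length * cfMatrix l 0 1), ?_⟩
  have hsq : ((-1 : ℤ) ^ l.length) ^ 2 = 1 := by rw [← pow_mul, pow_mul', neg_one_sq, one_pow]
  linear_combination (-1) ^ l.length * hdet + hsq

lemma cfMatrix_apply_eq_of_cf_eq_div {l : List ℤ} (hl : l ≠ []) (h : ∀ x ∈ l, 0 < x) {p q : ℤ}
    (hq : 0 < q) (hpq : IsCoprime p q) (hcf : cf l = (p : ℚ) / q) :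
    cfMatrix l 0 0 = p ∧ cfMatrix l 1 0 = q := by
  rw [cf_eq_cfMatrix hl h] at hcf
  exact Rat.div_int_inj (cfMatrix_apply_one_zero_pos hl h) hq
    (Int.isCoprime_iff_nat_coprime.mp (isCoprime_cfMatrix l)) (Int.isCoprime_iff_nat_coprime.mp hpq)
    hcf

lemma cfMatrix_palindrome_apply_zero_zero (l : List ℤ) (b : ℤ) :
    cfMatrix (l ++ [b - 1, b + 1] ++ l.reverse) 0 0 = cfMatrix (l ++ [b]) 0 0 ^ 2 := by
  simp only [cfMatrix_append, cfMatrix_cons, cfMatrix_nil, cfMatrix_reverse, mul_one, mul_apply,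
    Fin.sum_univ_two, transpose_apply]
  simp [cfStep]
  ring

lemma cfMatrix_palindrome_apply_one_zero (l : List ℤ) (b : ℤ) :
    cfMatrix (l ++ [b - 1, b + 1] ++ l.reverse) 1 0 =
      cfMatrix (l ++ [b]) 0 0 * cfMatrix (l ++ [b]) 1 0 + (-1) ^ l.length := by
  have hdet := det_cfMatrix l
  rw [det_fin_two] at hdet
  simp only [cfMatrix_append, cfMatrix_cons, cfMatrix_nil, cfMatrix_reverse, mul_one, mul_apply,
    Fin.sum_univ_two, transpose_apply]
  simp [cfStep]
  linear_combination hdet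

theorem crosscap_stmt4_general (p q n : ℕ) (a : ℕ → ℤ) (hq : 0 < q)
    (hcop : Nat.Coprime p q) (hn : 1 ≤ n)
    (hpos : ∀ i, 1 ≤ i → i ≤ n → 0 < a i) (hlast : 1 < a n)
    (hcf : cf (List.ofFn fun i : Fin n => a (i+1)) = (p : ℚ) / q) :
    cf ((List.ofFn fun i : Fin (n-1) => a (i+1)) ++ [a n - 1, a n + 1] ++
        (List.ofFn fun i : Fin (n-1) => a (i+1)).reverse)
      = (p:ℚ)^2 / ((p:ℚ) * q + (-1)^(n-1)) := by
  obtain ⟨m, rfl⟩ : ∃ m, n = m + 1 := ⟨n - 1, by omega⟩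
  simp only [Nat.add_sub_cancel, Fin.val_cast]
  set l : List ℤ := List.ofFn fun i : Fin m => a (i + 1)
  have hsplit : (List.ofFn fun i : Fin (m + 1) => a (i + 1)) = l ++ [a (m + 1)] := by
    rw [List.ofFn_succ', List.concat_eq_append]
    rfl
  have hl : ∀ x ∈ l ++ [a (m + 1)], 0 < x := by
    rw [← hsplit, List.forall_mem_ofFn_iff]
    exact fun i => hpos _ (by omega) (by omega)
  obtain ⟨hp, hq'⟩ := cfMatrix_apply_eq_of_cf_eq_div (by simp) hl (Int.natCast_pos.mpr hq)
    (Nat.isCoprime_iff_coprime.mpr hcop) (by rw [← hsplit, hcf]; push_cast; rfl)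
  have hpal : ∀ x ∈ l ++ [a (m + 1) - 1, a (m + 1) + 1] ++ l.reverse, 0 < x := by
    intro x hx
    simp only [List.mem_append, List.mem_reverse, List.mem_cons, List.not_mem_nil, or_false] at hx
    rcases hx with (hx | rfl | rfl) | hx
    · exact hl x (List.mem_append_left _ hx)
    · omega
    · omega
    · exact hl x (List.mem_append_left _ hx)
  rw [cf_eq_cfMatrix (by simp) hpal, cfMatrix_palindrome_apply_zero_zero,
    cfMatrix_palindrome_apply_one_zero, hp, hq']
  simp [l]

theorem crosscap_stmt4 (p q n : ℕ) (a : ℕ → ℤ) (hq : 0 < q) (hqp : q < p)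
    (hcop : Nat.Coprime p q) (hn : 1 ≤ n)
    (hpos : ∀ i, 1 ≤ i → i ≤ n → 0 < a i) (hlast : 1 < a n)
    (hcf : cf (List.ofFn fun i : Fin n => a (i+1)) = (p : ℚ) / q) :
    cf ((List.ofFn fun i : Fin (n-1) => a (i+1)) ++ [a n - 1, a n + 1] ++
        (List.ofFn fun i : Fin (n-1) => a (i+1)).reverse)
      = (p:ℚ)^2 / ((p:ℚ) * q + (-1)^(n-1)) :=
  crosscap_stmt4_general p q n a hq hcop hn hpos hlast hcf
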